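/- arXiv:1307.8139 — 2 statements merged into one kernel-verified Lean document; each statement's English description precedes it below -/
import Mathlib

section
/- Let d > 1 and C > 0 be real constants. There exists a constant K > 0 (depending only on d and C) such that for every set system (X, S) on a finite ground set X with |X| = n whose primal shatter function satisfies π_S(m) ≤ C·m^d for all 1 ≤ m ≤ n, and for every integer 1 ≤ δ ≤ n, every δ-separated subfamily P ⊆ S satisfies |P| ≤ K·(n/δ)^d. -/
/-!
A primal shatter function bounded by `C m^d` forces the VC-dimension to be at most a constant
`v = v(C, d)`, since a shattered set of size `m` has `2^m` traces. Haussler's edge-counting lemma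
then says that the unit-distance graph of a family of VC-dimension `v` has at most `v` edges per
vertex. Following Chazelle, pick a `k`-subset `A` of `X` with `k ≈ 4 v n / δ` and one more point
`a`: within a fiber of the trace on `A`, δ-separation forces `a` to split the fiber in a balanced
way often, and each such split is an edge of the (multiplicity-weighted) unit-distance graph of
the traces on `insert a A`. Averaging over all choices, the edge bound controls these splits by
half of `|P|`, so `|P| ≤ 2 π(k) ≤ 2 C (4 v n / δ)^d`.
-/

open scoped symmDiff
open Finset
namespace Finset

variable {α : Type*} [DecidableEq α]

/-- The lower endpoints of the edges in direction `a` of the unit-distance graph of `𝒜`, whose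
edges join the members of `𝒜` that differ in exactly one element. -/
def lowerEdges (𝒜 : Finset (Finset α)) (a : α) : Finset (Finset α) :=
  𝒜.memberSubfamily a ∩ 𝒜.nonMemberSubfamily a

lemma mem_lowerEdges {𝒜 : Finset (Finset α)} {a : α} {s : Finset α} :
    s ∈ 𝒜.lowerEdges a ↔ s ∈ 𝒜 ∧ a ∉ s ∧ insert a s ∈ 𝒜 := by
  simp only [lowerEdges, mem_inter, mem_memberSubfamily, mem_nonMemberSubfamily]
  tauto

lemma lowerEdges_memberSubfamily {𝒜 : Finset (Finset α)} {a b : α} (hab : a ≠ b) :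
    (𝒜.memberSubfamily b).lowerEdges a = (𝒜.lowerEdges a).memberSubfamily b := by
  ext s
  simp only [mem_lowerEdges, mem_memberSubfamily, mem_insert, insert_comm a b]
  grind

lemma lowerEdges_nonMemberSubfamily {𝒜 : Finset (Finset α)} {a b : α} (hab : a ≠ b) :
    (𝒜.nonMemberSubfamily b).lowerEdges a = (𝒜.lowerEdges a).nonMemberSubfamily b := by
  ext s
  simp only [mem_lowerEdges, mem_nonMemberSubfamily, mem_insert]
  grind

lemma lowerEdges_filter (𝒜 : Finset (Finset α)) (a : α) (p : Finset α → Prop) [DecidablePred p] :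
    (𝒜.filter p).lowerEdges a = (𝒜.lowerEdges a).filter (fun s => p s ∧ p (insert a s)) := by
  ext s
  simp only [mem_lowerEdges, mem_filter]
  tauto

lemma union_lowerEdges_subset (𝒜 ℬ : Finset (Finset α)) (a : α) :
    𝒜.lowerEdges a ∪ ℬ.lowerEdges a ⊆ (𝒜 ∪ ℬ).lowerEdges a := by
  intro s
  simp only [mem_union, mem_lowerEdges]
  tauto

lemma inter_lowerEdges_subset (𝒜 ℬ : Finset (Finset α)) (a : α) :
    𝒜.lowerEdges a ∩ ℬ.lowerEdges a ⊆ (𝒜 ∩ ℬ).lowerEdges a := by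
  intro s
  simp only [mem_inter, mem_lowerEdges]
  tauto

lemma Shatters.of_memberSubfamily_union_nonMemberSubfamily {𝒜 : Finset (Finset α)} {a : α}
    {s : Finset α} (hs : (𝒜.memberSubfamily a ∪ 𝒜.nonMemberSubfamily a).Shatters s) :
    𝒜.Shatters s := by
  obtain ⟨u, hu, hsu⟩ := hs.exists_superset
  have has : a ∉ s := fun ha => by
    rcases mem_union.1 hu with hu | hu
    · exact (mem_memberSubfamily.1 hu).2 (hsu ha)
    · exact (mem_nonMemberSubfamily.1 hu).2 (hsu ha)
  intro t ht
  obtain ⟨u, hu, rfl⟩ := hs ht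
  rcases mem_union.1 hu with hu | hu
  · exact ⟨insert a u, (mem_memberSubfamily.1 hu).1, by rw [inter_insert_of_notMem has]⟩
  · exact ⟨u, (mem_nonMemberSubfamily.1 hu).1, rfl⟩

lemma Shatters.insert_of_lowerEdges {𝒜 : Finset (Finset α)} {a : α} {s : Finset α}
    (hs : (𝒜.lowerEdges a).Shatters s) : 𝒜.Shatters (insert a s) := by
  intro t ht
  obtain ⟨u, hu, hsu⟩ := hs (subset_insert_iff.1 ht)
  obtain ⟨hu𝒜, hau, hau𝒜⟩ := mem_lowerEdges.1 hu
  by_cases hat : a ∈ t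
  · exact ⟨insert a u, hau𝒜, by rw [← insert_inter_distrib, hsu, insert_erase hat]⟩
  · exact ⟨u, hu𝒜, by rw [insert_inter_of_notMem hau, hsu, erase_eq_of_notMem hat]⟩

lemma vcDim_lowerEdges_lt {𝒜 : Finset (Finset α)} {a : α} (h : (𝒜.lowerEdges a).Nonempty) :
    (𝒜.lowerEdges a).vcDim < 𝒜.vcDim := by
  obtain ⟨s, hs, hcard⟩ := exists_mem_eq_sup _ ⟨∅, mem_shatterer.2 (shatters_empty.2 h)⟩ card
  have hs := mem_shatterer.1 hs
  obtain ⟨u, hu, hsu⟩ := hs.exists_superset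
  have has : a ∉ s := fun ha => (mem_lowerEdges.1 hu).2.1 (hsu ha)
  calc (𝒜.lowerEdges a).vcDim = #s := hcard
    _ < #(insert a s) := by rw [card_insert_of_notMem has]; omega
    _ ≤ 𝒜.vcDim := hs.insert_of_lowerEdges.card_le_vcDim

lemma vcDim_memberSubfamily_union_nonMemberSubfamily_le (𝒜 : Finset (Finset α)) (a : α) :
    (𝒜.memberSubfamily a ∪ 𝒜.nonMemberSubfamily a).vcDim ≤ 𝒜.vcDim :=
  sup_mono fun _ hs => mem_shatterer.2
    (mem_shatterer.1 hs).of_memberSubfamily_union_nonMemberSubfamily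

/-- Haussler's edge-counting lemma. -/
theorem sum_card_lowerEdges_le (𝒜 : Finset (Finset α)) (s : Finset α) :
    ∑ a ∈ s, #(𝒜.lowerEdges a) ≤ 𝒜.vcDim * #𝒜 := by
  induction s using Finset.induction_on generalizing 𝒜 with
  | empty => simp
  | insert b s hb ih =>
    set ℳ := 𝒜.memberSubfamily b
    set 𝒩 := 𝒜.nonMemberSubfamily b
    have hℰ : 𝒜.lowerEdges b = ℳ ∩ 𝒩 := rfl
    have hsplit : ∀ a ∈ s,
        #(𝒜.lowerEdges a) ≤ #((ℳ ∪ 𝒩).lowerEdges a) + #((ℳ ∩ 𝒩).lowerEdges a) := by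
      intro a ha
      have hab : a ≠ b := ne_of_mem_of_not_mem ha hb
      calc #(𝒜.lowerEdges a) = #(ℳ.lowerEdges a) + #(𝒩.lowerEdges a) := by
            rw [lowerEdges_memberSubfamily hab, lowerEdges_nonMemberSubfamily hab,
              card_memberSubfamily_add_card_nonMemberSubfamily]
        _ = #(ℳ.lowerEdges a ∪ 𝒩.lowerEdges a) + #(ℳ.lowerEdges a ∩ 𝒩.lowerEdges a) :=
            (card_union_add_card_inter _ _).symm
        _ ≤ _ := add_le_add (card_le_card (union_lowerEdges_subset ..))
            (card_le_card (inter_lowerEdges_subset ..))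
    have hcard : #(ℳ ∪ 𝒩) + #(ℳ ∩ 𝒩) = #𝒜 := by
      rw [card_union_add_card_inter, card_memberSubfamily_add_card_nonMemberSubfamily]
    have hvc_union := Nat.mul_le_mul_right #(ℳ ∪ 𝒩)
      (vcDim_memberSubfamily_union_nonMemberSubfamily_le 𝒜 b)
    have hvc_inter : ((ℳ ∩ 𝒩).vcDim + 1) * #(ℳ ∩ 𝒩) ≤ 𝒜.vcDim * #(ℳ ∩ 𝒩) := by
      rcases (ℳ ∩ 𝒩).eq_empty_or_nonempty with h | h
      · simp [h]
      · exact Nat.mul_le_mul_right _ (vcDim_lowerEdges_lt h)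
    calc ∑ a ∈ insert b s, #(𝒜.lowerEdges a)
        = #(ℳ ∩ 𝒩) + ∑ a ∈ s, #(𝒜.lowerEdges a) := by rw [sum_insert hb, hℰ]
      _ ≤ #(ℳ ∩ 𝒩) + (∑ a ∈ s, #((ℳ ∪ 𝒩).lowerEdges a) + ∑ a ∈ s, #((ℳ ∩ 𝒩).lowerEdges a)) := by
        rw [← sum_add_distrib]; gcongr with a ha; exact hsplit a ha
      _ ≤ #(ℳ ∩ 𝒩) + ((ℳ ∪ 𝒩).vcDim * #(ℳ ∪ 𝒩) + (ℳ ∩ 𝒩).vcDim * #(ℳ ∩ 𝒩)) := by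
        gcongr <;> apply ih
      _ ≤ 𝒜.vcDim * #𝒜 := by rw [← hcard]; nlinarith

lemma eq_sum_range_ite_lt {x M : ℕ} (hx : x ≤ M) : x = ∑ k ∈ range M, if k < x then 1 else 0 := by
  have hfilter : (range M).filter (· < x) = range x := by
    ext k
    simp only [mem_filter, mem_range]
    omega
  rw [sum_boole, Nat.cast_id, hfilter, card_range]

/-- The weighted form of `sum_card_lowerEdges_le`, obtained by applying it to the level sets
of `w`. -/
theorem sum_sum_lowerEdges_min_le (𝒜 : Finset (Finset α)) (s : Finset α) (w : Finset α → ℕ) :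
    ∑ a ∈ s, ∑ t ∈ 𝒜.lowerEdges a, min (w t) (w (insert a t)) ≤ 𝒜.vcDim * ∑ t ∈ 𝒜, w t := by
  set M := ∑ t ∈ 𝒜, w t
  set level : ℕ → Finset (Finset α) := fun k => 𝒜.filter (fun t => k < w t)
  have hw : ∀ t ∈ 𝒜, w t ≤ M := fun t ht => single_le_sum (fun _ _ => Nat.zero_le _) ht
  have hedges : ∀ a, ∑ t ∈ 𝒜.lowerEdges a, min (w t) (w (insert a t))
      = ∑ k ∈ range M, #((level k).lowerEdges a) := by
    intro a
    rw [sum_congr rfl fun t ht =>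
      eq_sum_range_ite_lt (min_le_of_left_le (hw t (mem_lowerEdges.1 ht).1)), sum_comm]
    simp only [lt_min_iff, level, lowerEdges_filter, card_filter]
  have hlevels : M = ∑ k ∈ range M, #(level k) := by
    calc M = ∑ t ∈ 𝒜, ∑ k ∈ range M, if k < w t then 1 else 0 :=
          sum_congr rfl fun t ht => eq_sum_range_ite_lt (hw t ht)
      _ = _ := by rw [sum_comm]; simp only [level, card_filter]
  calc ∑ a ∈ s, ∑ t ∈ 𝒜.lowerEdges a, min (w t) (w (insert a t))
      = ∑ k ∈ range M, ∑ a ∈ s, #((level k).lowerEdges a) := by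
        simp_rw [hedges]; exact sum_comm
    _ ≤ ∑ k ∈ range M, (level k).vcDim * #(level k) :=
        sum_le_sum fun k _ => sum_card_lowerEdges_le _ _
    _ ≤ ∑ k ∈ range M, 𝒜.vcDim * #(level k) :=
        sum_le_sum fun k _ => Nat.mul_le_mul_right _ (vcDim_mono (filter_subset _ _))
    _ = 𝒜.vcDim * M := by rw [← mul_sum, ← hlevels]

lemma sum_sum_card_symmDiff (𝒲 : Finset (Finset α)) (Y : Finset α)
    (hY : ∀ S ∈ 𝒲, ∀ T ∈ 𝒲, S ∆ T ⊆ Y) :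
    ∑ S ∈ 𝒲, ∑ T ∈ 𝒲, #(S ∆ T) = 2 * ∑ a ∈ Y, #(𝒲.filter (a ∈ ·)) * #(𝒲.filter (a ∉ ·)) := by
  have hcount : ∀ S ∈ 𝒲, ∀ T ∈ 𝒲, #(S ∆ T) = ∑ a ∈ Y, if a ∈ S ∆ T then 1 else 0 := by
    intro S hS T hT
    rw [sum_boole, Nat.cast_id, filter_mem_eq_inter, inter_eq_right.2 (hY S hS T hT)]
  have hpairs : ∀ a, ∑ S ∈ 𝒲, ∑ T ∈ 𝒲, (if a ∈ S ∆ T then 1 else 0)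
      = 2 * (#(𝒲.filter (a ∈ ·)) * #(𝒲.filter (a ∉ ·))) := by
    intro a
    rw [card_filter, card_filter, sum_mul_sum, two_mul]
    nth_rewrite 2 [sum_comm]
    rw [← sum_add_distrib]
    refine sum_congr rfl fun S _ => ?_
    rw [← sum_add_distrib]
    refine sum_congr rfl fun T _ => ?_
    by_cases haS : a ∈ S <;> by_cases haT : a ∈ T <;> simp [mem_symmDiff, haS, haT]
  calc ∑ S ∈ 𝒲, ∑ T ∈ 𝒲, #(S ∆ T)
      = ∑ S ∈ 𝒲, ∑ T ∈ 𝒲, ∑ a ∈ Y, if a ∈ S ∆ T then 1 else 0 :=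
        sum_congr rfl fun S hS => sum_congr rfl fun T hT => hcount S hS T hT
    _ = ∑ a ∈ Y, ∑ S ∈ 𝒲, ∑ T ∈ 𝒲, if a ∈ S ∆ T then 1 else 0 :=
        (sum_congr rfl fun _ _ => sum_comm).trans sum_comm
    _ = _ := by simp_rw [hpairs, mul_sum]

lemma add_one_mul_card_sub_one_le_sum_card_symmDiff {𝒲 : Finset (Finset α)} {δ : ℕ}
    (hsep : ∀ S ∈ 𝒲, ∀ T ∈ 𝒲, S ≠ T → δ < #(S ∆ T)) {S : Finset α} (hS : S ∈ 𝒲) :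
    (δ + 1) * (#𝒲 - 1) ≤ ∑ T ∈ 𝒲, #(S ∆ T) :=
  calc (δ + 1) * (#𝒲 - 1) = ∑ T ∈ 𝒲.erase S, (δ + 1) := by
        rw [sum_const, card_erase_of_mem hS, smul_eq_mul, mul_comm]
    _ ≤ ∑ T ∈ 𝒲.erase S, #(S ∆ T) :=
        sum_le_sum fun T hT => hsep S hS T (mem_of_mem_erase hT) (ne_of_mem_erase hT).symm
    _ ≤ ∑ T ∈ 𝒲, #(S ∆ T) := sum_le_sum_of_subset (erase_subset _ _)

theorem add_one_mul_card_le_sum_min_card_filter {𝒲 : Finset (Finset α)} {Y : Finset α} {δ : ℕ}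
    (hY : ∀ S ∈ 𝒲, ∀ T ∈ 𝒲, S ∆ T ⊆ Y) (hsep : ∀ S ∈ 𝒲, ∀ T ∈ 𝒲, S ≠ T → δ < #(S ∆ T)) :
    (δ + 1) * #𝒲 ≤ 2 * ∑ a ∈ Y, min #(𝒲.filter (a ∉ ·)) #(𝒲.filter (a ∈ ·)) + (δ + 1) := by
  rcases 𝒲.eq_empty_or_nonempty with rfl | hne
  · simp
  have hbalance : ∀ a, #(𝒲.filter (a ∈ ·)) * #(𝒲.filter (a ∉ ·))
      ≤ #𝒲 * min #(𝒲.filter (a ∉ ·)) #(𝒲.filter (a ∈ ·)) := by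
    intro a
    rw [← card_filter_add_card_filter_not (s := 𝒲) (p := (a ∈ ·))]
    rcases min_cases #(𝒲.filter (a ∉ ·)) #(𝒲.filter (a ∈ ·)) with ⟨h, -⟩ | ⟨h, -⟩ <;>
      rw [h] <;> nlinarith
  have hmul : #𝒲 * ((δ + 1) * (#𝒲 - 1))
      ≤ #𝒲 * (2 * ∑ a ∈ Y, min #(𝒲.filter (a ∉ ·)) #(𝒲.filter (a ∈ ·))) :=
    calc #𝒲 * ((δ + 1) * (#𝒲 - 1)) = ∑ S ∈ 𝒲, (δ + 1) * (#𝒲 - 1) := by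
          rw [sum_const, smul_eq_mul]
      _ ≤ ∑ S ∈ 𝒲, ∑ T ∈ 𝒲, #(S ∆ T) :=
          sum_le_sum fun S hS => add_one_mul_card_sub_one_le_sum_card_symmDiff hsep hS
      _ = 2 * ∑ a ∈ Y, #(𝒲.filter (a ∈ ·)) * #(𝒲.filter (a ∉ ·)) := sum_sum_card_symmDiff 𝒲 Y hY
      _ ≤ 2 * ∑ a ∈ Y, #𝒲 * min #(𝒲.filter (a ∉ ·)) #(𝒲.filter (a ∈ ·)) := 
          Nat.mul_le_mul_left 2 (sum_le_sum fun a _ => hbalance a)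
      _ = #𝒲 * (2 * ∑ a ∈ Y, min #(𝒲.filter (a ∉ ·)) #(𝒲.filter (a ∈ ·))) := by
          rw [← mul_sum]; ring
  have hcancel := Nat.le_of_mul_le_mul_left hmul hne.card_pos
  obtain ⟨k, hk⟩ := Nat.exists_eq_add_one.2 hne.card_pos
  rw [hk, Nat.add_sub_cancel] at hcancel
  rw [hk]
  linarith

lemma Shatters.of_image_inter {ℱ : Finset (Finset α)} {A s : Finset α}
    (hs : (ℱ.image (· ∩ A)).Shatters s) : ℱ.Shatters s := by
  obtain ⟨_, hv, hsv⟩ := hs.exists_superset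
  obtain ⟨v, -, rfl⟩ := mem_image.1 hv
  have hsA : s ⊆ A := hsv.trans inter_subset_right
  intro t ht
  obtain ⟨_, hu, rfl⟩ := hs ht
  obtain ⟨u, huℱ, rfl⟩ := mem_image.1 hu
  exact ⟨u, huℱ, by rw [inter_left_comm, inter_eq_left.2 hsA, inter_comm]⟩

lemma vcDim_image_inter_le (ℱ : Finset (Finset α)) (A : Finset α) :
    (ℱ.image (· ∩ A)).vcDim ≤ ℱ.vcDim :=
  sup_mono fun _ hs => mem_shatterer.2 (mem_shatterer.1 hs).of_image_inter

def traceFiber (ℱ : Finset (Finset α)) (A t : Finset α) : Finset (Finset α) :=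
  ℱ.filter (· ∩ A = t)

lemma sum_card_traceFiber (ℱ : Finset (Finset α)) (A : Finset α) :
    ∑ t ∈ ℱ.image (· ∩ A), #(traceFiber ℱ A t) = #ℱ :=
  (card_eq_sum_card_fiberwise fun _ h => mem_image_of_mem _ h).symm

lemma mem_image_inter_of_traceFiber_nonempty {ℱ : Finset (Finset α)} {A t : Finset α}
    (h : (traceFiber ℱ A t).Nonempty) : t ∈ ℱ.image (· ∩ A) := by
  obtain ⟨S, hS⟩ := h
  exact mem_image.2 ⟨S, mem_filter.1 hS⟩

lemma traceFiber_insert {ℱ : Finset (Finset α)} {A t : Finset α} {a : α}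
    (hat : a ∉ t) : traceFiber ℱ (insert a A) t = (traceFiber ℱ A t).filter (a ∉ ·) := by
  ext S
  simp only [traceFiber, mem_filter, and_assoc]
  refine and_congr_right fun _ => ?_
  by_cases haS : a ∈ S
  · rw [inter_insert_of_mem haS]
    simp only [haS, not_true_eq_false, and_false, iff_false]
    exact fun h => hat (h ▸ mem_insert_self _ _)
  · rw [inter_insert_of_notMem haS]
    simp [haS]

lemma traceFiber_insert_insert {ℱ : Finset (Finset α)} {A t : Finset α} {a : α} (haA : a ∉ A)
    (hat : a ∉ t) :
    traceFiber ℱ (insert a A) (insert a t) = (traceFiber ℱ A t).filter (a ∈ ·) := by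
  ext S
  simp only [traceFiber, mem_filter, and_assoc]
  refine and_congr_right fun _ => ?_
  by_cases haS : a ∈ S
  · have haSA : a ∉ S ∩ A := fun h => haA (mem_inter.1 h).2
    rw [inter_insert_of_mem haS]
    simp only [haS, and_true]
    refine ⟨fun h => ?_, fun h => h ▸ rfl⟩
    simpa [erase_insert haSA, erase_insert hat] using congrArg (erase · a) h
  · rw [inter_insert_of_notMem haS]
    simp only [haS, and_false, iff_false]
    exact fun h => haS (mem_inter.1 (h ▸ mem_insert_self a t : a ∈ S ∩ A)).1

/-- The edges in direction `a` of the unit-distance graph of the traces of `ℱ` on `A`, each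
weighted by the smaller multiplicity of its two endpoints. -/
def edgeWeight (ℱ : Finset (Finset α)) (A : Finset α) (a : α) : ℕ :=
  ∑ t ∈ (ℱ.image (· ∩ A)).lowerEdges a,
    min #(traceFiber ℱ A t) #(traceFiber ℱ A (insert a t))

lemma sum_edgeWeight_le (ℱ : Finset (Finset α)) (A s : Finset α) :
    ∑ a ∈ s, edgeWeight ℱ A a ≤ ℱ.vcDim * #ℱ :=
  calc ∑ a ∈ s, edgeWeight ℱ A a ≤ (ℱ.image (· ∩ A)).vcDim * #ℱ := by
        rw [← sum_card_traceFiber ℱ A]; exact sum_sum_lowerEdges_min_le _ _ _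
    _ ≤ ℱ.vcDim * #ℱ := Nat.mul_le_mul_right _ (vcDim_image_inter_le ℱ A)

lemma sum_min_card_traceFiber_le_edgeWeight (ℱ : Finset (Finset α)) {A : Finset α} {a : α}
    (haA : a ∉ A) :
    ∑ t ∈ ℱ.image (· ∩ A),
        min #(traceFiber ℱ (insert a A) t) #(traceFiber ℱ (insert a A) (insert a t))
      ≤ edgeWeight ℱ (insert a A) a := by
  rw [edgeWeight, ← sum_filter_ne_zero]
  refine sum_le_sum_of_subset fun t ht => ?_
  obtain ⟨ht, hmin⟩ := mem_filter.1 ht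
  obtain ⟨S, -, rfl⟩ := mem_image.1 ht
  rw [Nat.min_def] at hmin
  refine mem_lowerEdges.2 ⟨mem_image_inter_of_traceFiber_nonempty (card_pos.1 ?_),
    fun h => haA (mem_inter.1 h).2, mem_image_inter_of_traceFiber_nonempty (card_pos.1 ?_)⟩ <;>
    split_ifs at hmin <;> omega

lemma symmDiff_subset_sdiff_of_inter_eq {S T X A : Finset α} (hS : S ⊆ X) (hT : T ⊆ X)
    (h : S ∩ A = T ∩ A) : S ∆ T ⊆ X \ A := by
  refine subset_sdiff.2 ⟨symmDiff_le_sup.trans (union_subset hS hT), ?_⟩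
  rw [disjoint_iff, inf_symmDiff_distrib_right]
  exact symmDiff_eq_bot.2 h

theorem add_one_mul_card_traceFiber_le {ℱ : Finset (Finset α)} {X A t : Finset α} {δ : ℕ}
    (hX : ∀ S ∈ ℱ, S ⊆ X) (hsep : ∀ S ∈ ℱ, ∀ T ∈ ℱ, S ≠ T → δ < #(S ∆ T)) (htA : t ⊆ A) :
    (δ + 1) * #(traceFiber ℱ A t) ≤ 2 * ∑ a ∈ X \ A,
      min #(traceFiber ℱ (insert a A) t) #(traceFiber ℱ (insert a A) (insert a t)) + (δ + 1) := by
  have hfiber : ∀ S ∈ traceFiber ℱ A t, S ∈ ℱ ∧ S ∩ A = t := fun S hS => mem_filter.1 hS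
  have hY : ∀ S ∈ traceFiber ℱ A t, ∀ T ∈ traceFiber ℱ A t, S ∆ T ⊆ X \ A := fun S hS T hT =>
    symmDiff_subset_sdiff_of_inter_eq (hX S (hfiber S hS).1) (hX T (hfiber T hT).1)
      ((hfiber S hS).2.trans (hfiber T hT).2.symm)
  refine (add_one_mul_card_le_sum_min_card_filter hY fun S hS T hT =>
    hsep S (hfiber S hS).1 T (hfiber T hT).1).trans_eq ?_
  congr 2
  refine sum_congr rfl fun a ha => ?_
  have haA := (mem_sdiff.1 ha).2
  have hat : a ∉ t := fun h => haA (htA h)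
  rw [traceFiber_insert hat, traceFiber_insert_insert haA hat]

theorem add_one_mul_card_le_sum_edgeWeight {ℱ : Finset (Finset α)} {X : Finset α} {δ : ℕ}
    (hX : ∀ S ∈ ℱ, S ⊆ X) (hsep : ∀ S ∈ ℱ, ∀ T ∈ ℱ, S ≠ T → δ < #(S ∆ T)) (A : Finset α) :
    (δ + 1) * #ℱ
      ≤ 2 * ∑ a ∈ X \ A, edgeWeight ℱ (insert a A) a + (δ + 1) * #(ℱ.image (· ∩ A)) :=
  calc (δ + 1) * #ℱ = ∑ t ∈ ℱ.image (· ∩ A), (δ + 1) * #(traceFiber ℱ A t) := by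
        rw [← mul_sum, sum_card_traceFiber]
    _ ≤ ∑ t ∈ ℱ.image (· ∩ A), (2 * ∑ a ∈ X \ A,
          min #(traceFiber ℱ (insert a A) t) #(traceFiber ℱ (insert a A) (insert a t))
          + (δ + 1)) := sum_le_sum fun t ht => by
          obtain ⟨S, -, rfl⟩ := mem_image.1 ht
          exact add_one_mul_card_traceFiber_le hX hsep inter_subset_right
    _ = 2 * ∑ a ∈ X \ A, ∑ t ∈ ℱ.image (· ∩ A),
          min #(traceFiber ℱ (insert a A) t) #(traceFiber ℱ (insert a A) (insert a t))
          + (δ + 1) * #(ℱ.image (· ∩ A)) := by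
        rw [sum_add_distrib, ← mul_sum, sum_comm, sum_const, smul_eq_mul, mul_comm #_]
    _ ≤ _ := by
        gcongr with a ha
        exact sum_min_card_traceFiber_le_edgeWeight ℱ (mem_sdiff.1 ha).2

lemma sum_powersetCard_succ_sum {β : Type*} [AddCommMonoid β] (X : Finset α) (k : ℕ)
    (F : Finset α → α → β) :
    ∑ B ∈ X.powersetCard (k + 1), ∑ a ∈ B, F B a
      = ∑ A ∈ X.powersetCard k, ∑ a ∈ X \ A, F (insert a A) a := by
  rw [sum_sigma', sum_sigma']
  refine sum_bij' (fun p _ => ⟨p.1.erase p.2, p.2⟩) (fun p _ => ⟨insert p.2 p.1, p.2⟩)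
    ?_ ?_ ?_ ?_ ?_
  · rintro ⟨B, a⟩ hp
    obtain ⟨hB, ha⟩ := mem_sigma.1 hp
    obtain ⟨hBX, hBk⟩ := mem_powersetCard.1 hB
    exact mem_sigma.2 ⟨mem_powersetCard.2 ⟨(erase_subset _ _).trans hBX,
      by rw [card_erase_of_mem ha, hBk, Nat.add_sub_cancel]⟩,
      mem_sdiff.2 ⟨hBX ha, notMem_erase _ _⟩⟩
  · rintro ⟨A, a⟩ hp
    obtain ⟨hA, ha⟩ := mem_sigma.1 hp
    obtain ⟨hAX, hAk⟩ := mem_powersetCard.1 hA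
    obtain ⟨haX, haA⟩ := mem_sdiff.1 ha
    exact mem_sigma.2 ⟨mem_powersetCard.2 ⟨insert_subset haX hAX,
      by rw [card_insert_of_notMem haA, hAk]⟩, mem_insert_self _ _⟩
  · rintro ⟨B, a⟩ hp
    simp [insert_erase (mem_sigma.1 hp).2]
  · rintro ⟨A, a⟩ hp
    simp [erase_insert (mem_sdiff.1 (mem_sigma.1 hp).2).2]
  · rintro ⟨B, a⟩ hp
    simp [insert_erase (mem_sigma.1 hp).2]

theorem add_one_mul_card_mul_choose_le {ℱ : Finset (Finset α)} {X : Finset α} {δ : ℕ}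
    (hX : ∀ S ∈ ℱ, S ⊆ X) (hsep : ∀ S ∈ ℱ, ∀ T ∈ ℱ, S ≠ T → δ < #(S ∆ T)) (k : ℕ) :
    (δ + 1) * #ℱ * (#X).choose k
      ≤ 2 * (ℱ.vcDim * #ℱ) * (#X).choose (k + 1)
        + (δ + 1) * ∑ A ∈ X.powersetCard k, #(ℱ.image (· ∩ A)) :=
  calc (δ + 1) * #ℱ * (#X).choose k = ∑ A ∈ X.powersetCard k, (δ + 1) * #ℱ := by
        rw [sum_const, card_powersetCard, smul_eq_mul, mul_comm]
    _ ≤ ∑ A ∈ X.powersetCard k, (2 * ∑ a ∈ X \ A, edgeWeight ℱ (insert a A) a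
          + (δ + 1) * #(ℱ.image (· ∩ A))) :=
        sum_le_sum fun A _ => add_one_mul_card_le_sum_edgeWeight hX hsep A
    _ = 2 * ∑ B ∈ X.powersetCard (k + 1), ∑ a ∈ B, edgeWeight ℱ B a
          + (δ + 1) * ∑ A ∈ X.powersetCard k, #(ℱ.image (· ∩ A)) := by
        rw [sum_add_distrib, ← mul_sum, ← mul_sum, sum_powersetCard_succ_sum]
    _ ≤ 2 * ∑ B ∈ X.powersetCard (k + 1), ℱ.vcDim * #ℱ
          + (δ + 1) * ∑ A ∈ X.powersetCard k, #(ℱ.image (· ∩ A)) := by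
        gcongr with B
        exact sum_edgeWeight_le ℱ B B
    _ = _ := by rw [sum_const, card_powersetCard, smul_eq_mul]; ring

theorem card_le_two_mul_of_separated {ℱ : Finset (Finset α)} {X : Finset α} {δ v k : ℕ}
    (hX : ∀ S ∈ ℱ, S ⊆ X) (hsep : ∀ S ∈ ℱ, ∀ T ∈ ℱ, S ≠ T → δ < #(S ∆ T))
    (hv : ℱ.vcDim ≤ v) (hk : k ≤ #X) (hkδ : 4 * v * #X < (k + 1) * δ) {M : ℝ}
    (hM : ∀ A ⊆ X, #A = k → (#(ℱ.image (· ∩ A)) : ℝ) ≤ M) :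
    (#ℱ : ℝ) ≤ 2 * M := by
  set n := #X
  have hcount : ((δ + 1) * #ℱ * n.choose k : ℝ) ≤ 2 * (ℱ.vcDim * #ℱ) * n.choose (k + 1)
      + (δ + 1) * ∑ A ∈ X.powersetCard k, (#(ℱ.image (· ∩ A)) : ℝ) := by
    exact_mod_cast add_one_mul_card_mul_choose_le hX hsep k
  have htraces : ∑ A ∈ X.powersetCard k, (#(ℱ.image (· ∩ A)) : ℝ) ≤ n.choose k * M :=
    calc ∑ A ∈ X.powersetCard k, (#(ℱ.image (· ∩ A)) : ℝ) ≤ ∑ A ∈ X.powersetCard k, M :=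
          sum_le_sum fun A hA => hM A (mem_powersetCard.1 hA).1 (mem_powersetCard.1 hA).2
      _ = n.choose k * M := by rw [sum_const, card_powersetCard, nsmul_eq_mul]
  have hchoose : (n.choose (k + 1) * (k + 1) : ℝ) ≤ n.choose k * n := by
    exact_mod_cast (Nat.choose_succ_right_eq n k).trans_le (Nat.mul_le_mul_left _ (Nat.sub_le n k))
  have hvc : (ℱ.vcDim : ℝ) ≤ v := by exact_mod_cast hv
  have hkδ' : (4 * v * n : ℝ) < (k + 1) * δ := by exact_mod_cast hkδ
  have hN : (0 : ℝ) < n.choose k := by exact_mod_cast Nat.choose_pos hk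
  set p : ℝ := (#ℱ : ℝ)
  set N : ℝ := (n.choose k : ℝ)
  have hp : 0 ≤ p := Nat.cast_nonneg _
  have hedges : 2 * (ℱ.vcDim * p) * n.choose (k + 1) * (k + 1) ≤ 2 * (v * p) * (N * n) := by
    rw [mul_assoc _ _ ((k : ℝ) + 1)]
    gcongr
  have hedges_half : 2 * (2 * (v * p) * (N * n)) ≤ (k + 1) * (δ + 1) * p * N := by
    have : (4 * v * n : ℝ) ≤ (k + 1) * (δ + 1) := by linarith
    nlinarith [mul_le_mul_of_nonneg_right this (mul_nonneg hp hN.le)]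
  have hc : 0 < ((δ : ℝ) + 1) * (k + 1) * N := by positivity
  refine le_of_mul_le_mul_left ?_ hc
  nlinarith [mul_le_mul_of_nonneg_right hcount (by positivity : (0 : ℝ) ≤ k + 1),
    mul_le_mul_of_nonneg_left htraces (by positivity : (0 : ℝ) ≤ (δ + 1) * (k + 1))]

theorem vcDim_le_of_card_image_inter_le {𝒮 : Finset (Finset α)} {X : Finset α} {C d : ℝ} {v : ℕ}
    (hX : ∀ S ∈ 𝒮, S ⊆ X)
    (hπ : ∀ Y ⊆ X, 1 ≤ #Y → (#(𝒮.image (· ∩ Y)) : ℝ) ≤ C * (#Y : ℝ) ^ d)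
    (hv : ∀ m : ℕ, v < m → C * (m : ℝ) ^ d < 2 ^ m) :
    𝒮.vcDim ≤ v := by
  refine Finset.sup_le fun Z hZ => ?_
  have hZ := mem_shatterer.1 hZ
  by_contra! hvZ
  obtain ⟨u, hu, hZu⟩ := hZ.exists_superset
  have himage : 𝒮.image (· ∩ Z) = Z.powerset := by
    simp_rw [← shatters_iff.1 hZ, inter_comm]
  have hbound := hπ Z (hZu.trans (hX u hu)) (by omega)
  rw [himage, card_powerset, Nat.cast_pow, Nat.cast_ofNat] at hbound
  exact (hv _ hvZ).not_ge hbound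

theorem card_le_two_mul_rpow_of_separated {𝒮 𝒬 : Finset (Finset α)} {X : Finset α} {C d : ℝ}
    {δ v : ℕ}
    (hX : ∀ S ∈ 𝒮, S ⊆ X)
    (hπ : ∀ Y ⊆ X, 1 ≤ #Y → (#(𝒮.image (· ∩ Y)) : ℝ) ≤ C * (#Y : ℝ) ^ d)
    (hC : 0 ≤ C) (hd : 0 ≤ d) (hv : 1 ≤ v) (hvc : 𝒮.vcDim ≤ v) (hδ : 1 ≤ δ) (hδX : δ ≤ #X)
    (h𝒬 : 𝒬 ⊆ 𝒮) (hsep : ∀ S ∈ 𝒬, ∀ T ∈ 𝒬, S ≠ T → δ < #(S ∆ T)) :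
    (#𝒬 : ℝ) ≤ 2 * C * (4 * v * #X / δ : ℝ) ^ d := by
  have hδ' : (0 : ℝ) < δ := by exact_mod_cast hδ
  -- For `δ < 4 v` the trivial bound `#𝒬 ≤ π(#X)` suffices; otherwise sample `k = ⌊4 v n / δ⌋`.
  rcases lt_or_ge δ (4 * v) with hδv | hδv
  · have hX𝒬 : #𝒬 ≤ #(𝒮.image (· ∩ X)) :=
      card_le_card fun S hS => mem_image.2 ⟨S, h𝒬 hS, inter_eq_left.2 (hX S (h𝒬 hS))⟩
    have hXδ : (#X : ℝ) ≤ 4 * v * #X / δ := by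
      rw [le_div_iff₀ hδ', mul_comm]
      gcongr
      exact_mod_cast hδv.le
    calc (#𝒬 : ℝ) ≤ C * (#X : ℝ) ^ d :=
          (Nat.cast_le.2 hX𝒬).trans (hπ X subset_rfl (by omega))
      _ ≤ C * (4 * v * #X / δ : ℝ) ^ d := by gcongr
      _ ≤ 2 * C * (4 * v * #X / δ : ℝ) ^ d := by
          have : 0 ≤ C * (4 * v * #X / δ : ℝ) ^ d := by positivity
          linarith
  · set k := 4 * v * #X / δ
    have hk : 1 ≤ k := (Nat.le_div_iff_mul_le hδ).2 (by nlinarith)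
    have hkX : k ≤ #X := Nat.div_le_of_le_mul (Nat.mul_le_mul_right _ hδv)
    have hkδ : 4 * v * #X < (k + 1) * δ := mul_comm δ _ ▸ Nat.lt_mul_div_succ _ hδ
    calc (#𝒬 : ℝ) ≤ 2 * (C * (k : ℝ) ^ d) :=
          card_le_two_mul_of_separated (fun S hS => hX S (h𝒬 hS)) hsep
            ((vcDim_mono h𝒬).trans hvc) hkX hkδ fun A hA hAk =>
              (Nat.cast_le.2 (card_le_card (image_subset_image h𝒬))).trans
                (by simpa only [hAk] using hπ A hA (by omega))
      _ ≤ 2 * C * (4 * v * #X / δ : ℝ) ^ d := by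
          rw [← mul_assoc]
          gcongr
          exact_mod_cast Nat.cast_div_le

end Finset

lemma eventually_mul_rpow_lt_two_pow (C d : ℝ) :
    ∀ᶠ m : ℕ in Filter.atTop, C * (m : ℝ) ^ d < 2 ^ m := by
  have hlim := ((tendsto_rpow_mul_exp_neg_mul_atTop_nhds_zero d (Real.log 2)
    (Real.log_pos one_lt_two)).comp tendsto_natCast_atTop_atTop).const_mul C
  rw [mul_zero] at hlim
  filter_upwards [hlim.eventually (gt_mem_nhds one_pos)] with m hm
  have hexp : Real.exp (-Real.log 2 * m) = (2 ^ m)⁻¹ := by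
    rw [neg_mul, Real.exp_neg, ← Real.rpow_def_of_pos two_pos, Real.rpow_natCast]
  simp only [Function.comp_apply, hexp, ← div_eq_mul_inv, ← mul_div_assoc] at hm
  rwa [div_lt_one (by positivity)] at hm

/-- Packing Lemma of Haussler/Chazelle.
Let `d > 1` and `C > 0`. There exists `K > 0` (depending only on `d` and `C`) such that
for every set system `(X, 𝒮)` with `|X| = n` and primal shatter function bounded by
`C·m^d` for all `1 ≤ m ≤ n`, and every integer `1 ≤ δ ≤ n`, every `δ`-separated
subfamily `P ⊆ 𝒮` satisfies `|P| ≤ K·(n/δ)^d`. -/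
theorem stmt2 (d C : ℝ) (hd : 1 < d) (hC : 0 < C) :
    ∃ K : ℝ, 0 < K ∧
      ∀ (α : Type) [DecidableEq α] (X : Finset α) (𝒮 : Finset (Finset α)),
        (∀ S ∈ 𝒮, S ⊆ X) →
        (∀ Y ⊆ X, 1 ≤ Y.card →
          ((𝒮.image (· ∩ Y)).card : ℝ) ≤ C * (Y.card : ℝ) ^ d) →
        ∀ δ : ℕ, 1 ≤ δ → δ ≤ X.card →
          ∀ P : Finset (Finset α), P ⊆ 𝒮 →
            (∀ S₁ ∈ P, ∀ S₂ ∈ P, S₁ ≠ S₂ → δ < (S₁ ∆ S₂).card) →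
            (P.card : ℝ) ≤ K * ((X.card : ℝ) / (δ : ℝ)) ^ d := by
  obtain ⟨v, hv⟩ := Filter.eventually_atTop.1 (eventually_mul_rpow_lt_two_pow C d)
  refine ⟨2 * C * (4 * (v + 1 : ℕ)) ^ d, by positivity, ?_⟩
  intro α _ X 𝒮 hX hπ δ hδ hδX P hP hsep
  have hvc : 𝒮.vcDim ≤ v + 1 :=
    vcDim_le_of_card_image_inter_le hX hπ fun m hm => hv m (by omega)
  have hpack :=
    card_le_two_mul_rpow_of_separated hX hπ hC.le (by linarith) (by omega) hvc hδ hδX hP hsep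
  rwa [mul_div_assoc, Real.mul_rpow (by positivity) (by positivity), ← mul_assoc] at hpack
end

section
/- Let d > 1, K > 0, and ν > 0 be real constants. Let X' be a finite set partitioned into two disjoint subsets Y and Y', with m = |X'| ≥ 2 and |Y| ≥ 1, and suppose |Y| = m·(1 + δ)/2 where 0 ≤ δ ≤ K·(log₂ m)^{3/2 + 1/(2d)} / m^{1/2 + 1/(2d)}. Let S be a finite set such that | |S ∩ Y| − |S ∩ Y'| | ≤ K · |S ∩ X'|^{1/2 − 1/(2d)} · (log₂ m)^{3/2 + 1/(2d)}. Writing p = |S ∩ X'|/m and q = |S ∩ Y|/|Y|, one has d_ν(p, q) ≤ K·(log₂ m)^{3/2 + 1/(2d)} / (ν·m)^{1/2 + 1/(2d)} + δ. -/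
/-!
Since `|Y| = m(1 + δ)/2`, the gap `|p − q|` is at most `| |S ∩ X'| − 2|S ∩ Y| | / m + p δ`,
and `|S ∩ X'| − 2|S ∩ Y|` is the discrepancy `|S ∩ Y'| − |S ∩ Y|`. The `p δ` part contributes
at most `δ` to `d_ν(p, q)`. For the discrepancy part, the denominator `p + q + ν` is at least
`(a + ν m)/m` with `a = |S ∩ X'|`, and weighted AM–GM with exponents `1/2 − 1/(2d)` and
`1/2 + 1/(2d)` gives `a^{1/2 − 1/(2d)} (ν m)^{1/2 + 1/(2d)} ≤ a + ν m`.
-/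

open Finset

noncomputable def distNu (ν r s : ℝ) : ℝ := |r - s| / (r + s + ν)

lemma Finset.card_inter_union_of_disjoint {α : Type*} [DecidableEq α] {Y Y' : Finset α}
    (h : Disjoint Y Y') (S : Finset α) :
    #(S ∩ (Y ∪ Y')) = #(S ∩ Y) + #(S ∩ Y') := by
  rw [inter_union_distrib_left]
  exact card_union_of_disjoint (h.mono inter_subset_right inter_subset_right)

lemma Real.rpow_mul_rpow_le_add {x y s t : ℝ} (hx : 0 ≤ x) (hy : 0 ≤ y) (hs : 0 ≤ s)
    (ht : 0 ≤ t) (hst : s + t = 1) : x ^ s * y ^ t ≤ x + y := by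
  have := Real.geom_mean_le_arith_mean2_weighted hs ht hx hy hst
  nlinarith

lemma div_add_le_div_rpow_of_le {e C x y s t : ℝ} (hC : 0 ≤ C) (hx : 0 ≤ x) (hy : 0 < y)
    (hs : 0 ≤ s) (ht : 0 ≤ t) (hst : s + t = 1) (he : e ≤ C * x ^ s) :
    e / (x + y) ≤ C / y ^ t := by
  have hyt : 0 < y ^ t := Real.rpow_pos_of_pos hy t
  rw [div_le_div_iff₀ (by positivity) hyt]
  calc e * y ^ t ≤ C * x ^ s * y ^ t := by gcongr
    _ = C * (x ^ s * y ^ t) := by ring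
    _ ≤ C * (x + y) := by gcongr; exact Real.rpow_mul_rpow_le_add hx hy.le hs ht hst

lemma abs_div_sub_div_half_mul_le {a b m δ : ℝ} (ha : 0 ≤ a) (hm : 0 < m) (hδ : 0 ≤ δ) :
    |a / m - b / (m * (1 + δ) / 2)| ≤ |a - 2 * b| / m + a / m * δ := by
  have hδ' : 0 < 1 + δ := by linarith
  have hsplit : a / m - b / (m * (1 + δ) / 2) = ((a - 2 * b) + a * δ) / (m * (1 + δ)) := by
    field_simp
    ring
  rw [hsplit, abs_div, abs_of_pos (mul_pos hm hδ'), div_le_iff₀ (mul_pos hm hδ')]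
  calc |(a - 2 * b) + a * δ| ≤ |a - 2 * b| + a * δ := by
        simpa [abs_of_nonneg (mul_nonneg ha hδ)] using abs_add_le (a - 2 * b) (a * δ)
    _ ≤ (|a - 2 * b| + a * δ) * (1 + δ) := by
        nlinarith [abs_nonneg (a - 2 * b), mul_nonneg ha hδ]
    _ = (|a - 2 * b| / m + a / m * δ) * (m * (1 + δ)) := by
        field_simp

lemma distNu_le_of_abs_sub_le {ν p q e δ : ℝ} (hν : 0 < ν) (hp : 0 ≤ p) (hq : 0 ≤ q)
    (he : 0 ≤ e) (hδ : 0 ≤ δ) (h : |p - q| ≤ e + p * δ) :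
    distNu ν p q ≤ e / (p + ν) + δ := by
  have hD : 0 < p + q + ν := by positivity
  calc distNu ν p q ≤ (e + p * δ) / (p + q + ν) := by
        unfold distNu; gcongr
    _ = e / (p + q + ν) + p / (p + q + ν) * δ := by ring
    _ ≤ e / (p + ν) + 1 * δ := by
        gcongr
        · linarith
        · rw [div_le_one hD]; linarith
    _ = e / (p + ν) + δ := by ring

theorem stmt17_general {α : Type*} [DecidableEq α] (d K ν : ℝ) (hd : 1 < d) (hK : 0 < K)
    (hν : 0 < ν) (X' Y Y' : Finset α) (hdisj : Disjoint Y Y') (hunion : X' = Y ∪ Y')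
    (hm : 2 ≤ X'.card) (δ : ℝ) (hδ0 : 0 ≤ δ)
    (hYcard : (Y.card : ℝ) = (X'.card : ℝ) * (1 + δ) / 2)
    (S : Finset α)
    (hdisc : |((S ∩ Y).card : ℝ) - ((S ∩ Y').card : ℝ)| ≤
      K * ((S ∩ X').card : ℝ) ^ ((1 : ℝ) / 2 - 1 / (2 * d)) *
        Real.logb 2 (X'.card : ℝ) ^ ((3 : ℝ) / 2 + 1 / (2 * d))) :
    |((S ∩ X').card : ℝ) / (X'.card : ℝ) - ((S ∩ Y).card : ℝ) / (Y.card : ℝ)| /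
        (((S ∩ X').card : ℝ) / (X'.card : ℝ) + ((S ∩ Y).card : ℝ) / (Y.card : ℝ) + ν) ≤
      K * Real.logb 2 (X'.card : ℝ) ^ ((3 : ℝ) / 2 + 1 / (2 * d)) /
        (ν * (X'.card : ℝ)) ^ ((1 : ℝ) / 2 + 1 / (2 * d)) + δ := by
  have hsplit : ((S ∩ X').card : ℝ) = (S ∩ Y).card + (S ∩ Y').card := by
    rw [hunion, card_inter_union_of_disjoint hdisj]; push_cast; rfl
  have hm2 : (2 : ℝ) ≤ X'.card := by exact_mod_cast hm
  set m : ℝ := (X'.card : ℝ)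
  set a : ℝ := ((S ∩ X').card : ℝ)
  set b : ℝ := ((S ∩ Y).card : ℝ)
  set c : ℝ := ((S ∩ Y').card : ℝ)
  have hm0 : 0 < m := by linarith
  have hexp : 1 / (2 * d) < 1 / 2 := by gcongr; linarith
  have hlog : 0 ≤ Real.logb 2 m ^ ((3 : ℝ) / 2 + 1 / (2 * d)) :=
    Real.rpow_nonneg (Real.logb_nonneg one_lt_two (by linarith)) _
  have hgap : |a / m - b / Y.card| ≤ |a - 2 * b| / m + a / m * δ := by
    rw [hYcard]; exact abs_div_sub_div_half_mul_le (Nat.cast_nonneg _) hm0 hδ0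
  calc distNu ν (a / m) (b / Y.card)
      ≤ |a - 2 * b| / m / (a / m + ν) + δ :=
        distNu_le_of_abs_sub_le hν (by positivity) (by positivity) (by positivity) hδ0 hgap
    _ = |b - c| / (a + ν * m) + δ := by
        rw [hsplit, ← abs_neg]; field_simp; ring_nf
    _ ≤ _ := by
        rw [mul_right_comm] at hdisc
        refine add_le_add_left (div_add_le_div_rpow_of_le (mul_nonneg hK.le hlog)
          (Nat.cast_nonneg _) (mul_pos hν hm0) (by linarith) (by positivity) ?_ hdisc) δ
        ring

/-- the `d_ν`-distance bound for one halving step.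
Let `d > 1`, `K > 0`, `ν > 0`. Let `X'` be a finite set partitioned into disjoint `Y`,
`Y'` with `m = |X'| ≥ 2`, `|Y| ≥ 1`, `|Y| = m·(1 + δ)/2` where
`0 ≤ δ ≤ K·(log₂ m)^{3/2 + 1/(2d)} / m^{1/2 + 1/(2d)}`. Let `S` be a finite set with
`| |S ∩ Y| − |S ∩ Y'| | ≤ K·|S ∩ X'|^{1/2 − 1/(2d)}·(log₂ m)^{3/2 + 1/(2d)}`. Writing
`p = |S ∩ X'|/m` and `q = |S ∩ Y|/|Y|`, one has
`d_ν(p, q) ≤ K·(log₂ m)^{3/2 + 1/(2d)} / (ν·m)^{1/2 + 1/(2d)} + δ`, where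
`d_ν(r, s) = |r − s| / (r + s + ν)`. -/
theorem stmt17 {α : Type*} [DecidableEq α] (d K ν : ℝ) (hd : 1 < d) (hK : 0 < K)
    (hν : 0 < ν) (X' Y Y' : Finset α) (hdisj : Disjoint Y Y') (hunion : X' = Y ∪ Y')
    (hm : 2 ≤ X'.card) (hY : 1 ≤ Y.card) (δ : ℝ) (hδ0 : 0 ≤ δ)
    (hδ1 : δ ≤ K * Real.logb 2 (X'.card : ℝ) ^ ((3 : ℝ) / 2 + 1 / (2 * d)) /
      (X'.card : ℝ) ^ ((1 : ℝ) / 2 + 1 / (2 * d)))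
    (hYcard : (Y.card : ℝ) = (X'.card : ℝ) * (1 + δ) / 2)
    (S : Finset α)
    (hdisc : |((S ∩ Y).card : ℝ) - ((S ∩ Y').card : ℝ)| ≤
      K * ((S ∩ X').card : ℝ) ^ ((1 : ℝ) / 2 - 1 / (2 * d)) *
        Real.logb 2 (X'.card : ℝ) ^ ((3 : ℝ) / 2 + 1 / (2 * d))) :
    |((S ∩ X').card : ℝ) / (X'.card : ℝ) - ((S ∩ Y).card : ℝ) / (Y.card : ℝ)| /
        (((S ∩ X').card : ℝ) / (X'.card : ℝ) + ((S ∩ Y).card : ℝ) / (Y.card : ℝ) + ν) ≤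
      K * Real.logb 2 (X'.card : ℝ) ^ ((3 : ℝ) / 2 + 1 / (2 * d)) /
        (ν * (X'.card : ℝ)) ^ ((1 : ℝ) / 2 + 1 / (2 * d)) + δ :=
  stmt17_general d K ν hd hK hν X' Y Y' hdisj hunion hm δ hδ0 hYcard S hdisc
end
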